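/- arXiv:2407.06907 — 2 statements merged into one kernel-verified Lean document; each statement's English description precedes it below -/
import Mathlib

section
/- Let 0 < s < 1, ε > 0, a < b, and let X : [a,b] → ℝ be continuous with M := sup_{z ∈ ℝ} ∫_a^b |X(r) - z|^{-s} dr < ∞. For θ, r ∈ [a,b] set γ^{θ,r}(t) = t·X(r) + (1-t)·X(θ). Then sup_{z ∈ ℝ} ∫_a^b ∫_a^b |r - θ|^{ε-1} ∫_0^1 |γ^{θ,r}(t) - z|^{-s} dt dθ dr ≤ C·M, where C is a constant depending only on a, b, ε, s (one may take C = (4/ε)(b-a)^ε · (1 + 1/(1-s))). -/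
open Set MeasureTheory ENNReal

lemma rpow_neg_anti {x y : ℝ} (hx : 0 < x) (hxy : x ≤ y) {s : ℝ} (hs : 0 ≤ s) :
    (ENNReal.ofReal y) ^ (-s) ≤ (ENNReal.ofReal x) ^ (-s) := by
  rw [ENNReal.rpow_neg, ENNReal.rpow_neg]
  exact ENNReal.inv_le_inv.mpr (ENNReal.rpow_le_rpow (ENNReal.ofReal_le_ofReal hxy) hs)

-- right piece: ∫_{Icc c v} |t-c|^p ≤ (v-c)^{p+1}/(p+1)
lemma piece_right (p : ℝ) (hp : -1 < p) (c v : ℝ) (hcv : c ≤ v) :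
    ∫⁻ t in Icc c v, (ENNReal.ofReal |t - c|) ^ p
      ≤ ENNReal.ofReal ((v - c) ^ (p + 1) / (p + 1)) := by
  have hp1 : (0:ℝ) < p + 1 := by linarith
  rw [← Measure.restrict_congr_set Ioc_ae_eq_Icc]
  rw [setLIntegral_congr_fun (g := fun t => ENNReal.ofReal ((t - c) ^ p)) measurableSet_Ioc
    (fun t ht => by
      have htc : (0:ℝ) < t - c := by linarith [ht.1]
      rw [abs_of_pos htc]
      exact ENNReal.ofReal_rpow_of_pos htc)]
  have hii : IntervalIntegrable (fun t => (t - c) ^ p) volume c v := by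
    have h0 := (intervalIntegral.intervalIntegrable_rpow' (a := 0) (b := v - c) hp).comp_sub_right c
    simpa using h0
  have hint : IntegrableOn (fun t => (t - c) ^ p) (Ioc c v) :=
    (intervalIntegrable_iff_integrableOn_Ioc_of_le hcv).mp hii
  have hnn : 0 ≤ᵐ[volume.restrict (Ioc c v)] fun t => (t - c) ^ p :=
    (ae_restrict_iff' measurableSet_Ioc).mpr (Filter.Eventually.of_forall
      (fun t ht => Real.rpow_nonneg (by linarith [ht.1]) p))
  rw [← ofReal_integral_eq_lintegral_ofReal hint hnn]
  apply ENNReal.ofReal_le_ofReal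
  have h1 : ∫ t in Ioc c v, (t - c) ^ p = ∫ t in c..v, (t - c) ^ p :=
    (intervalIntegral.integral_of_le hcv).symm
  rw [h1, intervalIntegral.integral_comp_sub_right (fun x => x ^ p) c, sub_self,
    integral_rpow (Or.inl hp), Real.zero_rpow (ne_of_gt hp1)]
  simp

lemma piece_left (p : ℝ) (hp : -1 < p) (c u : ℝ) (huc : u ≤ c) :
    ∫⁻ t in Icc u c, (ENNReal.ofReal |t - c|) ^ p
      ≤ ENNReal.ofReal ((c - u) ^ (p + 1) / (p + 1)) := by
  have hp1 : (0:ℝ) < p + 1 := by linarith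
  rw [← Measure.restrict_congr_set Ioo_ae_eq_Icc]
  rw [setLIntegral_congr_fun (g := fun t => ENNReal.ofReal ((c - t) ^ p)) measurableSet_Ioo
    (fun t ht => by
      have htc : (0:ℝ) < c - t := by linarith [ht.2]
      rw [abs_of_neg (by linarith [ht.2] : t - c < 0), neg_sub]
      exact ENNReal.ofReal_rpow_of_pos htc)]
  have hii : IntervalIntegrable (fun t => (c - t) ^ p) volume u c := by
    have h0 := (intervalIntegral.intervalIntegrable_rpow' (a := 0) (b := c - u) hp).comp_sub_left c
    exact (by simpa using h0 : IntervalIntegrable (fun x => (c - x) ^ p) volume c u).symm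
  have hint : IntegrableOn (fun t => (c - t) ^ p) (Ioo u c) :=
    ((intervalIntegrable_iff_integrableOn_Ioc_of_le huc).mp hii).mono_set Ioo_subset_Ioc_self
  have hnn : 0 ≤ᵐ[volume.restrict (Ioo u c)] fun t => (c - t) ^ p :=
    (ae_restrict_iff' measurableSet_Ioo).mpr (Filter.Eventually.of_forall
      (fun t ht => Real.rpow_nonneg (by linarith [ht.2]) p))
  rw [← ofReal_integral_eq_lintegral_ofReal hint hnn]
  apply ENNReal.ofReal_le_ofReal
  have h1 : ∫ t in Ioo u c, (c - t) ^ p = ∫ t in u..c, (c - t) ^ p := by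
    rw [intervalIntegral.integral_of_le huc, integral_Ioc_eq_integral_Ioo]
  rw [h1, intervalIntegral.integral_comp_sub_left (fun x => x ^ p) c, sub_self,
    integral_rpow (Or.inl hp), Real.zero_rpow (ne_of_gt hp1)]
  simp

lemma key1 (p u v c : ℝ) (hp : -1 < p) (hc : c ∈ Icc u v) :
    ∫⁻ t in Icc u v, (ENNReal.ofReal |t - c|) ^ p ≤
      ENNReal.ofReal (((c - u) ^ (p + 1) + (v - c) ^ (p + 1)) / (p + 1)) := by
  have hp1 : (0:ℝ) < p + 1 := by linarith
  have hsplit : Icc u v = Icc u c ∪ Icc c v := (Icc_union_Icc_eq_Icc hc.1 hc.2).symm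
  calc ∫⁻ t in Icc u v, (ENNReal.ofReal |t - c|) ^ p
      ≤ (∫⁻ t in Icc u c, (ENNReal.ofReal |t - c|) ^ p)
        + ∫⁻ t in Icc c v, (ENNReal.ofReal |t - c|) ^ p := by
        rw [hsplit]; exact lintegral_union_le _ _ _
    _ ≤ ENNReal.ofReal ((c - u) ^ (p + 1) / (p + 1))
        + ENNReal.ofReal ((v - c) ^ (p + 1) / (p + 1)) :=
        add_le_add (piece_left p hp c u hc.1) (piece_right p hp c v hc.2)
    _ = ENNReal.ofReal (((c - u) ^ (p + 1) + (v - c) ^ (p + 1)) / (p + 1)) := by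
        rw [← ENNReal.ofReal_add
          (div_nonneg (Real.rpow_nonneg (by linarith [hc.1]) _) hp1.le)
          (div_nonneg (Real.rpow_nonneg (by linarith [hc.2]) _) hp1.le)]
        congr 1; ring

lemma key2 {a b : ℝ} (ε : ℝ) (hε : 0 < ε) (c : ℝ) (hc : c ∈ Icc a b) :
    ∫⁻ t in Icc a b, (ENNReal.ofReal |t - c|) ^ (ε - 1) ≤
      ENNReal.ofReal (2 * (b - a) ^ ε / ε) := by
  refine (key1 (ε - 1) a b c (by linarith) hc).trans (ENNReal.ofReal_le_ofReal ?_)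
  have he : ε - 1 + 1 = ε := by ring
  rw [he]
  have h1 : (c - a) ^ ε ≤ (b - a) ^ ε :=
    Real.rpow_le_rpow (by linarith [hc.1]) (by linarith [hc.2]) hε.le
  have h2 : (b - c) ^ ε ≤ (b - a) ^ ε :=
    Real.rpow_le_rpow (by linarith [hc.2]) (by linarith [hc.1]) hε.le
  rw [div_le_div_iff₀ hε hε]
  nlinarith

lemma seg_bound (s : ℝ) (hs0 : 0 < s) (hs1 : s < 1) (A B : ℝ) :
    ∫⁻ t in Icc (0:ℝ) 1, (ENNReal.ofReal |(1 - t) * A + t * B|) ^ (-s) ≤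
      ENNReal.ofReal (1 + 1 / (1 - s)) *
        ((ENNReal.ofReal |A|) ^ (-s) + (ENNReal.ofReal |B|) ^ (-s)) := by
  have h1s : (0:ℝ) < 1 - s := by linarith
  have hinv : (0:ℝ) < 1 / (1 - s) := by positivity
  have hcoeff_pos : (0:ℝ) < 1 + 1 / (1 - s) := by positivity
  have hcoeff1 : (1:ℝ≥0∞) ≤ ENNReal.ofReal (1 + 1 / (1 - s)) := by
    rw [← ENNReal.ofReal_one]
    exact ENNReal.ofReal_le_ofReal (by linarith)
  rcases eq_or_ne A 0 with hA | hA
  · have h1 : (ENNReal.ofReal |A|) ^ (-s) = ⊤ := by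
      rw [hA, abs_zero, ENNReal.ofReal_zero, ENNReal.zero_rpow_of_neg (by linarith)]
    rw [h1, top_add, ENNReal.mul_top (ENNReal.ofReal_pos.mpr hcoeff_pos).ne']
    exact le_top
  rcases eq_or_ne B 0 with hB | hB
  · have h1 : (ENNReal.ofReal |B|) ^ (-s) = ⊤ := by
      rw [hB, abs_zero, ENNReal.ofReal_zero, ENNReal.zero_rpow_of_neg (by linarith)]
    rw [h1, add_top, ENNReal.mul_top (ENNReal.ofReal_pos.mpr hcoeff_pos).ne']
    exact le_top
  have hApos := abs_pos.mpr hA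
  have hBpos := abs_pos.mpr hB
  rcases lt_or_ge (A * B) 0 with hAB | hAB
  · -- opposite signs
    set L : ℝ := |A| + |B| with hLdef
    have hLpos : 0 < L := by positivity
    set c : ℝ := |A| / L with hcdef
    have hLc : L * c = |A| := by rw [hcdef]; field_simp
    have hc01 : c ∈ Icc (0:ℝ) 1 :=
      ⟨div_nonneg (abs_nonneg _) hLpos.le,
        by rw [div_le_one hLpos]; linarith [abs_nonneg B]⟩
    have habs : ∀ t : ℝ, |(1 - t) * A + t * B| = L * |t - c| := by
      intro t
      rcases mul_neg_iff.mp hAB with ⟨hA', hB'⟩ | ⟨hA', hB'⟩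
      · have hLval : L = A - B := by
          rw [hLdef, abs_of_pos hA', abs_of_neg hB']; ring
        have he : (1 - t) * A + t * B = L * (c - t) := by
          rw [mul_sub, hLc, abs_of_pos hA', hLval]; ring
        rw [he, abs_mul, abs_of_pos hLpos, abs_sub_comm]
      · have hLval : L = B - A := by
          rw [hLdef, abs_of_neg hA', abs_of_pos hB']; ring
        have he : (1 - t) * A + t * B = L * (t - c) := by
          rw [mul_sub, hLc, abs_of_neg hA', hLval]; ring
        rw [he, abs_mul, abs_of_pos hLpos]
    have hLne : ENNReal.ofReal L ≠ 0 := (ENNReal.ofReal_pos.mpr hLpos).ne'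
    have hLrne : (ENNReal.ofReal L) ^ (-s) ≠ ⊤ := by
      rw [Ne, ENNReal.rpow_eq_top_iff]
      push_neg
      exact ⟨fun h => absurd h hLne, fun h => absurd h ENNReal.ofReal_ne_top⟩
    calc ∫⁻ t in Icc (0:ℝ) 1, (ENNReal.ofReal |(1 - t) * A + t * B|) ^ (-s)
        = ∫⁻ t in Icc (0:ℝ) 1,
            (ENNReal.ofReal L) ^ (-s) * (ENNReal.ofReal |t - c|) ^ (-s) := by
          refine lintegral_congr fun t => ?_
          rw [habs t, ENNReal.ofReal_mul hLpos.le,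
            ENNReal.mul_rpow_of_ne_top ENNReal.ofReal_ne_top ENNReal.ofReal_ne_top]
      _ = (ENNReal.ofReal L) ^ (-s) * ∫⁻ t in Icc (0:ℝ) 1, (ENNReal.ofReal |t - c|) ^ (-s) :=
          lintegral_const_mul' _ _ hLrne
      _ ≤ (ENNReal.ofReal L) ^ (-s) * ENNReal.ofReal (2 / (1 - s)) := by
          refine mul_le_mul_right ?_ _
          refine (key1 (-s) 0 1 c (by linarith) hc01).trans (ENNReal.ofReal_le_ofReal ?_)
          have e1 : (c - 0) ^ (-s + 1) ≤ 1 :=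
            Real.rpow_le_one (by linarith [hc01.1]) (by linarith [hc01.2]) (by linarith)
          have e2 : (1 - c) ^ (-s + 1) ≤ 1 :=
            Real.rpow_le_one (by linarith [hc01.2]) (by linarith [hc01.1]) (by linarith)
          rw [div_le_div_iff₀ (by linarith) h1s]
          nlinarith
      _ = ENNReal.ofReal (1 / (1 - s)) *
            ((ENNReal.ofReal L) ^ (-s) + (ENNReal.ofReal L) ^ (-s)) := by
          have h2 : (2:ℝ) / (1 - s) = (1 / (1 - s)) * 2 := by ring
          rw [h2, ENNReal.ofReal_mul hinv.le, ENNReal.ofReal_ofNat, ← two_mul]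
          ring
      _ ≤ ENNReal.ofReal (1 + 1 / (1 - s)) *
            ((ENNReal.ofReal |A|) ^ (-s) + (ENNReal.ofReal |B|) ^ (-s)) := by
          refine mul_le_mul' (ENNReal.ofReal_le_ofReal (by linarith)) ?_
          exact add_le_add
            (rpow_neg_anti hApos (by rw [hLdef]; linarith [abs_nonneg B]) hs0.le)
            (rpow_neg_anti hBpos (by rw [hLdef]; linarith [abs_nonneg A]) hs0.le)
  · -- same sign
    have hABpos : 0 < A * B := lt_of_le_of_ne hAB (Ne.symm (mul_ne_zero hA hB))
    have hmin : ∀ t ∈ Icc (0:ℝ) 1, min |A| |B| ≤ |(1 - t) * A + t * B| := by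
      intro t ht
      rcases mul_pos_iff.mp hABpos with ⟨hA', hB'⟩ | ⟨hA', hB'⟩
      · refine le_trans ?_ (le_abs_self _)
        rw [abs_of_pos hA', abs_of_pos hB']
        rcases le_total A B with h | h
        · rw [min_eq_left h]; nlinarith [ht.1, ht.2]
        · rw [min_eq_right h]; nlinarith [ht.1, ht.2]
      · refine le_trans ?_ (neg_le_abs _)
        rw [abs_of_neg hA', abs_of_neg hB']
        rcases le_total A B with h | h
        · rw [min_eq_right (by linarith : -B ≤ -A)]; nlinarith [ht.1, ht.2]
        · rw [min_eq_left (by linarith : -A ≤ -B)]; nlinarith [ht.1, ht.2]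
    have hminpos : 0 < min |A| |B| := lt_min hApos hBpos
    calc ∫⁻ t in Icc (0:ℝ) 1, (ENNReal.ofReal |(1 - t) * A + t * B|) ^ (-s)
        ≤ ∫⁻ _ in Icc (0:ℝ) 1, (ENNReal.ofReal (min |A| |B|)) ^ (-s) :=
          setLIntegral_mono' measurableSet_Icc fun t ht =>
            rpow_neg_anti hminpos (hmin t ht) hs0.le
      _ = (ENNReal.ofReal (min |A| |B|)) ^ (-s) := by
          rw [setLIntegral_const, Real.volume_Icc]
          norm_num
      _ ≤ (ENNReal.ofReal |A|) ^ (-s) + (ENNReal.ofReal |B|) ^ (-s) := by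
          rcases min_cases |A| |B| with ⟨h, _⟩ | ⟨h, _⟩ <;> rw [h]
          · exact le_add_of_nonneg_right zero_le
          · exact le_add_of_nonneg_left zero_le
      _ ≤ ENNReal.ofReal (1 + 1 / (1 - s)) *
            ((ENNReal.ofReal |A|) ^ (-s) + (ENNReal.ofReal |B|) ^ (-s)) :=
          le_mul_of_one_le_left zero_le hcoeff1

/-- Uniform bound for the weighted variability integral along segments: if
`sup_z ∫_a^b |X(r)-z|^{-s} dr ≤ M`, then
`sup_z ∫_a^b ∫_a^b |r-θ|^{ε-1} ∫_0^1 |γ^{θ,r}(t)-z|^{-s} dt dθ dr ≤ (4/ε)(b-a)^ε (1 + 1/(1-s)) M`. -/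
theorem stmt6 (a b s ε M : ℝ) (hab : a < b) (hs0 : 0 < s) (hs1 : s < 1) (hε : 0 < ε)
    (X : ℝ → ℝ) (hX : ContinuousOn X (Icc a b)) (hM : 0 ≤ M)
    (hsup : ∀ z : ℝ,
      (∫⁻ r in Icc a b, (ENNReal.ofReal |X r - z|) ^ (-s)) ≤ ENNReal.ofReal M) :
    ∀ z : ℝ,
      (∫⁻ r in Icc a b, ∫⁻ θ in Icc a b,
          (ENNReal.ofReal |r - θ|) ^ (ε - 1) *
            ∫⁻ t in Icc (0:ℝ) 1,
              (ENNReal.ofReal |t * X r + (1 - t) * X θ - z|) ^ (-s))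
        ≤ ENNReal.ofReal ((4 / ε) * (b - a) ^ ε * (1 + 1 / (1 - s)) * M) := by
  intro z
  have h1s : (0:ℝ) < 1 - s := by linarith
  have hcoeff_pos : (0:ℝ) < 1 + 1 / (1 - s) := by positivity
  set μ := volume.restrict (Icc a b) with hμ
  set g : ℝ → ℝ≥0∞ := fun x => (ENNReal.ofReal |X x - z|) ^ (-s) with hg
  set K : ℝ → ℝ → ℝ≥0∞ := fun r θ => (ENNReal.ofReal |r - θ|) ^ (ε - 1) with hK
  set C₁ : ℝ≥0∞ := ENNReal.ofReal (1 + 1 / (1 - s)) with hC₁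
  set D : ℝ≥0∞ := ENNReal.ofReal (2 * (b - a) ^ ε / ε) with hD
  have hC₁top : C₁ ≠ ⊤ := ENNReal.ofReal_ne_top
  have hDtop : D ≠ ⊤ := ENNReal.ofReal_ne_top
  -- measurability facts
  have hgm : AEMeasurable g μ := by
    have hXm : AEMeasurable X μ := hX.aemeasurable measurableSet_Icc
    have hm : Measurable fun x : ℝ => (ENNReal.ofReal |x - z|) ^ (-s) :=
      ENNReal.continuous_rpow_const.measurable.comp
        (ENNReal.measurable_ofReal.comp ((measurable_id.sub measurable_const).abs))
    exact hm.comp_aemeasurable hXm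
  have hKm : Measurable fun p : ℝ × ℝ => K p.1 p.2 :=
    ENNReal.continuous_rpow_const.measurable.comp
      (ENNReal.measurable_ofReal.comp ((measurable_fst.sub measurable_snd).abs))
  have hKrm : ∀ r : ℝ, Measurable (K r) := fun r =>
    ENNReal.continuous_rpow_const.measurable.comp
      (ENNReal.measurable_ofReal.comp ((measurable_const.sub measurable_id).abs))
  have hKθm : ∀ θ : ℝ, Measurable fun r => K r θ := fun θ =>
    ENNReal.continuous_rpow_const.measurable.comp
      (ENNReal.measurable_ofReal.comp ((measurable_id.sub measurable_const).abs))
  -- kernel integral bounds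
  have hJ : ∀ r ∈ Icc a b, (∫⁻ θ, K r θ ∂μ) ≤ D := by
    intro r hr
    calc (∫⁻ θ, K r θ ∂μ) = ∫⁻ θ in Icc a b, (ENNReal.ofReal |θ - r|) ^ (ε - 1) := by
          rw [hμ]
          exact lintegral_congr fun θ => by rw [hK]; simp only; rw [abs_sub_comm]
      _ ≤ D := key2 ε hε r hr
  have hJ' : ∀ θ ∈ Icc a b, (∫⁻ r, K r θ ∂μ) ≤ D := fun θ hθ => key2 ε hε θ hθ
  -- segment bound
  have hseg : ∀ r θ : ℝ,
      (∫⁻ t in Icc (0:ℝ) 1, (ENNReal.ofReal |t * X r + (1 - t) * X θ - z|) ^ (-s))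
        ≤ C₁ * (g θ + g r) := by
    intro r θ
    have hrw : ∀ t : ℝ, t * X r + (1 - t) * X θ - z
        = (1 - t) * (X θ - z) + t * (X r - z) := fun t => by ring
    simp only [hrw]
    exact seg_bound s hs0 hs1 (X θ - z) (X r - z)
  have step1 : ∀ r ∈ Icc a b,
      (∫⁻ θ, K r θ * (∫⁻ t in Icc (0:ℝ) 1,
          (ENNReal.ofReal |t * X r + (1 - t) * X θ - z|) ^ (-s)) ∂μ)
        ≤ C₁ * D * g r + C₁ * ∫⁻ θ, K r θ * g θ ∂μ := by
    intro r hr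
    calc (∫⁻ θ, K r θ * (∫⁻ t in Icc (0:ℝ) 1,
            (ENNReal.ofReal |t * X r + (1 - t) * X θ - z|) ^ (-s)) ∂μ)
        ≤ ∫⁻ θ, K r θ * (C₁ * (g θ + g r)) ∂μ :=
          lintegral_mono (μ := μ) fun θ => mul_le_mul_right (hseg r θ) (K r θ)
      _ = C₁ * ∫⁻ θ, (K r θ * g θ + K r θ * g r) ∂μ := by
          rw [← lintegral_const_mul' C₁ _ hC₁top]
          exact lintegral_congr fun θ => by ring
      _ = C₁ * ((∫⁻ θ, K r θ * g θ ∂μ) + ∫⁻ θ, K r θ * g r ∂μ) := by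
          rw [lintegral_add_left' (f := fun θ => K r θ * g θ) ((hKrm r).aemeasurable.mul hgm)]
      _ = C₁ * ((∫⁻ θ, K r θ * g θ ∂μ) + (∫⁻ θ, K r θ ∂μ) * g r) := by
          rw [lintegral_mul_const'' _ (hKrm r).aemeasurable]
      _ ≤ C₁ * ((∫⁻ θ, K r θ * g θ ∂μ) + D * g r) :=
          mul_le_mul_right (add_le_add_right (mul_le_mul_left (hJ r hr) _) _) _
      _ = C₁ * D * g r + C₁ * ∫⁻ θ, K r θ * g θ ∂μ := by ring
  have hdouble : (∫⁻ r, ∫⁻ θ, K r θ * g θ ∂μ ∂μ) ≤ D * ENNReal.ofReal M := by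
    have hswap := lintegral_lintegral_swap (μ := μ) (ν := μ)
      (f := fun r θ => K r θ * g θ) (hKm.aemeasurable.mul hgm.comp_snd)
    rw [hswap]
    calc (∫⁻ θ, ∫⁻ r, K r θ * g θ ∂μ ∂μ)
        = ∫⁻ θ, (∫⁻ r, K r θ ∂μ) * g θ ∂μ :=
          lintegral_congr fun θ => lintegral_mul_const'' _ (hKθm θ).aemeasurable
      _ ≤ ∫⁻ θ, D * g θ ∂μ := by
          refine lintegral_mono_ae ((ae_restrict_iff' measurableSet_Icc).mpr
            (Filter.Eventually.of_forall fun θ hθ => mul_le_mul_left (hJ' θ hθ) _))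
      _ = D * ∫⁻ θ, g θ ∂μ := lintegral_const_mul' _ _ hDtop
      _ ≤ D * ENNReal.ofReal M := mul_le_mul_right (hsup z) _
  have hnn2 : (0:ℝ) ≤ 2 * (b - a) ^ ε / ε :=
    div_nonneg (mul_nonneg (by norm_num) (Real.rpow_nonneg (by linarith) ε)) hε.le
  have hfinal : ENNReal.ofReal ((4 / ε) * (b - a) ^ ε * (1 + 1 / (1 - s)) * M)
      = 2 * (C₁ * (D * ENNReal.ofReal M)) := by
    rw [show (4 / ε) * (b - a) ^ ε * (1 + 1 / (1 - s)) * M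
        = 2 * ((1 + 1 / (1 - s)) * ((2 * (b - a) ^ ε / ε) * M)) from by ring,
      ENNReal.ofReal_mul (by norm_num : (0:ℝ) ≤ 2),
      ENNReal.ofReal_mul hcoeff_pos.le, ENNReal.ofReal_mul hnn2, ENNReal.ofReal_ofNat]
  have main : (∫⁻ r, ∫⁻ θ, K r θ * (∫⁻ t in Icc (0:ℝ) 1,
            (ENNReal.ofReal |t * X r + (1 - t) * X θ - z|) ^ (-s)) ∂μ ∂μ)
        ≤ ENNReal.ofReal ((4 / ε) * (b - a) ^ ε * (1 + 1 / (1 - s)) * M) := by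
      calc (∫⁻ r, ∫⁻ θ, K r θ * (∫⁻ t in Icc (0:ℝ) 1,
            (ENNReal.ofReal |t * X r + (1 - t) * X θ - z|) ^ (-s)) ∂μ ∂μ)
        ≤ ∫⁻ r, (C₁ * D * g r + C₁ * ∫⁻ θ, K r θ * g θ ∂μ) ∂μ :=
          lintegral_mono_ae (μ := μ) ((ae_restrict_iff' measurableSet_Icc).mpr
            (Filter.Eventually.of_forall step1))
      _ = C₁ * D * (∫⁻ r, g r ∂μ) + C₁ * ∫⁻ r, ∫⁻ θ, K r θ * g θ ∂μ ∂μ := by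
          rw [lintegral_add_left' (hgm.const_mul _),
            lintegral_const_mul' (C₁ * D) _ (ENNReal.mul_ne_top hC₁top hDtop),
            lintegral_const_mul' C₁ _ hC₁top]
      _ ≤ C₁ * D * ENNReal.ofReal M + C₁ * (D * ENNReal.ofReal M) :=
          add_le_add (mul_le_mul_right (hsup z) _) (mul_le_mul_right hdouble _)
      _ = 2 * (C₁ * (D * ENNReal.ofReal M)) := by ring
      _ = ENNReal.ofReal ((4 / ε) * (b - a) ^ ε * (1 + 1 / (1 - s)) * M) := hfinal.symm
  simpa only [hK] using main
end

section
/- Let Z be an ℝ^m-valued centered Gaussian random vector with covariance σ²I, σ² > 0, and let 0 < s < 1. Then there is a constant c > 0 depending only on m and s (not on σ or z) such that for all z ∈ ℝ^m, E|Z - z|^{-m+1-s} ≤ c·(σ^{-m+1-s} ∧ |z|^{-m+1-s}), provided m - 1 + s < m (which always holds) so that the expectation is finite. -/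
open Set MeasureTheory ENNReal Real

namespace Stmt8Aux

open Metric Module

lemma rpow_anti {a b : ℝ≥0∞} (h : a ≤ b) {y : ℝ} (hy : y ≤ 0) : b ^ y ≤ a ^ y := by
  rw [← neg_neg y, ENNReal.rpow_neg b, ENNReal.rpow_neg a]
  exact ENNReal.inv_le_inv.2 (ENNReal.rpow_le_rpow h (by linarith))

lemma lintegral_norm {E : Type*} [NormedAddCommGroup E] [NormedSpace ℝ E] [MeasurableSpace E]
    [BorelSpace E] [FiniteDimensional ℝ E] [Nontrivial E]
    (μ : Measure E) [μ.IsAddHaarMeasure] {h : ℝ → ℝ≥0∞} (hh : Measurable h) :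
    ∫⁻ x, h ‖x‖ ∂μ = μ.toSphere univ *
      ∫⁻ r in Ioi (0 : ℝ), ENNReal.ofReal (r ^ (finrank ℝ E - 1)) * h r := by
  have h0 : μ.restrict ({(0 : E)}ᶜ) = μ := by
    rw [Measure.restrict_congr_set (ae_eq_univ.2 (by simp)), Measure.restrict_univ]
  have hmp := μ.measurePreserving_homeomorphUnitSphereProd
  have hhm : Measurable fun p : sphere (0 : E) 1 × Ioi (0 : ℝ) => h p.2 :=
    hh.comp (measurable_subtype_coe.comp measurable_snd)
  calc ∫⁻ x, h ‖x‖ ∂μ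
      = ∫⁻ x in ({(0 : E)}ᶜ), h ‖x‖ ∂μ := by rw [h0]
    _ = ∫⁻ x : ({(0 : E)}ᶜ : Set E), h ‖(x : E)‖ ∂(μ.comap Subtype.val) :=
        (lintegral_subtype_comap (measurableSet_singleton (0 : E)).compl _).symm
    _ = ∫⁻ x : ({(0 : E)}ᶜ : Set E),
          (fun p : sphere (0 : E) 1 × Ioi (0 : ℝ) => h p.2) (homeomorphUnitSphereProd E x)
          ∂(μ.comap Subtype.val) := by
        refine lintegral_congr fun x => ?_
        simp [homeomorphUnitSphereProd_apply_snd_coe]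
    _ = ∫⁻ p : sphere (0 : E) 1 × Ioi (0 : ℝ), h p.2
          ∂(μ.toSphere.prod (Measure.volumeIoiPow (finrank ℝ E - 1))) :=
        hmp.lintegral_comp hhm
    _ = μ.toSphere univ * ∫⁻ r : Ioi (0 : ℝ), h r ∂(Measure.volumeIoiPow (finrank ℝ E - 1)) := by
        rw [lintegral_prod _ hhm.aemeasurable]
        simp [lintegral_const, mul_comm]
    _ = μ.toSphere univ * ∫⁻ r in Ioi (0 : ℝ), ENNReal.ofReal (r ^ (finrank ℝ E - 1)) * h r := by
        congr 1
        rw [Measure.volumeIoiPow, lintegral_withDensity_eq_lintegral_mul _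
          ((measurable_subtype_coe.pow_const _).ennreal_ofReal)
          (g := fun r : Ioi (0:ℝ) => h r) (hh.comp measurable_subtype_coe)]
        exact lintegral_subtype_comap measurableSet_Ioi
          (fun r : ℝ => ENNReal.ofReal (r ^ (finrank ℝ E - 1)) * h r)

lemma ball_bound (m : ℕ) (hm : 1 ≤ m) (s : ℝ) (hs0 : 0 < s) (hs1 : s < 1) :
    ∃ K : ℝ, 0 < K ∧ ∀ R : ℝ, 0 < R →
      ∫⁻ x : EuclideanSpace ℝ (Fin m) in Metric.ball 0 R,
        (ENNReal.ofReal ‖x‖) ^ (-(m:ℝ) + 1 - s) ≤ ENNReal.ofReal (K * R ^ (1 - s)) := by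
  set E := EuclideanSpace ℝ (Fin m)
  haveI : Nonempty (Fin m) := ⟨⟨0, hm⟩⟩
  haveI : Nontrivial E := inferInstance
  set α : ℝ := -(m:ℝ) + 1 - s with hα
  set T : ℝ≥0∞ := (volume : Measure E).toSphere univ with hT
  have hTne : T ≠ ⊤ := measure_ne_top _ _
  have hs2 : (0:ℝ) ≤ 1/(1-s) := le_of_lt (one_div_pos.2 (by linarith))
  refine ⟨T.toReal * (1/(1-s)) + 1,
    by nlinarith [ENNReal.toReal_nonneg (a := T)], fun R hR => ?_⟩
  set h : ℝ → ℝ≥0∞ := fun r => if r < R then ENNReal.ofReal r ^ α else 0 with hdefh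
  have hmeas : Measurable h := by
    refine Measurable.ite (measurableSet_lt measurable_id measurable_const) ?_ measurable_const
    exact measurable_ofReal.pow_const α
  have step1 : ∫⁻ x : E in Metric.ball 0 R, (ENNReal.ofReal ‖x‖) ^ α = ∫⁻ x : E, h ‖x‖ := by
    rw [← lintegral_indicator measurableSet_ball]
    refine lintegral_congr fun x => ?_
    by_cases hx : ‖x‖ < R
    · simp [h, indicator, mem_ball_zero_iff, hx]
    · simp [h, indicator, mem_ball_zero_iff, hx]
  have step2 := lintegral_norm (volume : Measure E) hmeas
  have hfr : finrank ℝ E = m := finrank_euclideanSpace_fin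
  -- bound the radial integral
  have step3 : ∫⁻ r in Ioi (0 : ℝ), ENNReal.ofReal (r ^ (finrank ℝ E - 1)) * h r
      ≤ ∫⁻ r in Ioo (0 : ℝ) R, ENNReal.ofReal (r ^ (-s)) := by
    have hle : ∀ r ∈ Ioi (0 : ℝ), ENNReal.ofReal (r ^ (finrank ℝ E - 1)) * h r
        ≤ (Ioo (0 : ℝ) R).indicator (fun r => ENNReal.ofReal (r ^ (-s))) r := by
      intro r hr
      rcases lt_or_ge r R with h1 | h1
      · have hmem : r ∈ Ioo (0 : ℝ) R := ⟨hr, h1⟩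
        rw [indicator_of_mem hmem]
        have : h r = ENNReal.ofReal (r ^ α) := by
          rw [hdefh]; simp only [if_pos h1]
          exact ENNReal.ofReal_rpow_of_pos hr
        rw [this, ← ENNReal.ofReal_mul (pow_nonneg (le_of_lt hr) _)]
        apply le_of_eq
        congr 1
        rw [← Real.rpow_natCast r (finrank ℝ E - 1), ← Real.rpow_add hr]
        congr 1
        rw [hfr, Nat.cast_sub hm]
        push_cast
        rw [hα]; ring
      · have : h r = 0 := by rw [hdefh]; simp [not_lt.2 h1]
        simp [this]
    calc ∫⁻ r in Ioi (0 : ℝ), ENNReal.ofReal (r ^ (finrank ℝ E - 1)) * h r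
        ≤ ∫⁻ r in Ioi (0 : ℝ),
            (Ioo (0 : ℝ) R).indicator (fun r => ENNReal.ofReal (r ^ (-s))) r :=
          setLIntegral_mono (((by fun_prop : Measurable fun r : ℝ => r ^ (-s)).ennreal_ofReal).indicator
            measurableSet_Ioo) hle
      _ = ∫⁻ r in Ioo (0 : ℝ) R, ENNReal.ofReal (r ^ (-s)) := by
          rw [lintegral_indicator measurableSet_Ioo, Measure.restrict_restrict measurableSet_Ioo,
            Ioo_inter_Ioi]
          congr 1
          simp [hR]
  -- compute the radial integral
  have hInt : IntegrableOn (fun r : ℝ => r ^ (-s)) (Ioo 0 R) := by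
    have := intervalIntegral.intervalIntegrable_rpow' (a := 0) (b := R)
      (by linarith : (-1:ℝ) < -s)
    rw [intervalIntegrable_iff_integrableOn_Ioc_of_le hR.le] at this
    exact this.mono_set Ioo_subset_Ioc_self
  have step4 : ∫⁻ r in Ioo (0 : ℝ) R, ENNReal.ofReal (r ^ (-s))
      = ENNReal.ofReal (R ^ (1 - s) / (1 - s)) := by
    rw [← ofReal_integral_eq_lintegral_ofReal hInt ?_]
    · congr 1
      rw [← integral_Ioc_eq_integral_Ioo, ← intervalIntegral.integral_of_le hR.le,
        integral_rpow (Or.inl (by linarith))]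
      rw [Real.zero_rpow (by linarith : -s + 1 ≠ 0)]
      ring_nf
    · filter_upwards [ae_restrict_mem measurableSet_Ioo] with r hr
      exact Real.rpow_nonneg hr.1.le _
  -- put everything together
  rw [step1, step2]
  calc T * ∫⁻ r in Ioi (0 : ℝ), ENNReal.ofReal (r ^ (finrank ℝ E - 1)) * h r
      ≤ T * ENNReal.ofReal (R ^ (1 - s) / (1 - s)) := by
        exact mul_le_mul_right (step3.trans_eq step4) T
    _ ≤ ENNReal.ofReal ((T.toReal * (1/(1-s)) + 1) * R ^ (1 - s)) := by
        conv_lhs => rw [← ENNReal.ofReal_toReal hTne]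
        rw [← ENNReal.ofReal_mul ENNReal.toReal_nonneg]
        apply ENNReal.ofReal_le_ofReal
        have h1 : (0:ℝ) ≤ R ^ (1 - s) := Real.rpow_nonneg hR.le _
        have h2 : (0:ℝ) < 1 - s := by linarith
        have : T.toReal * (R ^ (1 - s) / (1 - s)) = (T.toReal * (1/(1-s))) * R ^ (1-s) := by
          ring
        rw [this]
        nlinarith [ENNReal.toReal_nonneg (a := T)]

lemma texp_bound (m : ℕ) {t : ℝ} (ht : 0 ≤ t) :
    t ^ (m:ℝ) ≤ Real.exp (2 * (m:ℝ)^2) * Real.exp (t^2/8) := by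
  have h1 : t ≤ rexp t := by linarith [Real.add_one_le_exp t]
  have h2 : t ^ (m:ℝ) ≤ (rexp t) ^ (m:ℝ) := Real.rpow_le_rpow ht h1 (by positivity)
  have h3 : (rexp t) ^ (m:ℝ) = rexp (t * m) := (Real.exp_mul t m).symm
  have h4 : rexp (t * m) ≤ rexp (2 * (m:ℝ)^2 + t^2/8) := by
    apply Real.exp_le_exp.2
    nlinarith [sq_nonneg (t - 4*m)]
  calc t ^ (m:ℝ) ≤ rexp (t * m) := h3 ▸ h2
    _ ≤ rexp (2 * (m:ℝ)^2 + t^2/8) := h4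
    _ = Real.exp (2 * (m:ℝ)^2) * Real.exp (t^2/8) := Real.exp_add _ _

lemma mass (m : ℕ) {σ : ℝ} (hσ : 0 < σ) :
    ∫⁻ x : EuclideanSpace ℝ (Fin m),
      ENNReal.ofReal ((2 * π * σ ^ 2) ^ (-(m:ℝ) / 2) * Real.exp (-‖x‖ ^ 2 / (2 * σ ^ 2))) = 1 := by
  set E := EuclideanSpace ℝ (Fin m)
  set b : ℝ := (2 * σ ^ 2)⁻¹ with hb
  have hbpos : 0 < b := by positivity
  have hCpos : 0 < (2 * π * σ ^ 2) ^ (-(m:ℝ) / 2) := Real.rpow_pos_of_pos (by positivity) _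
  have hexp : ∀ x : E, -‖x‖ ^ 2 / (2 * σ ^ 2) = -b * ‖x‖ ^ 2 := by
    intro x; rw [hb]; field_simp
  have hInt : Integrable (fun x : E => rexp (-b * ‖x‖ ^ 2)) := by
    have h := (GaussianFourier.integrable_cexp_neg_mul_sq_norm_add
      (V := E) (b := (b:ℂ)) (by simpa using hbpos) 0 0).re
    refine h.congr (ae_of_all _ fun x => ?_)
    have : (-(b:ℂ) * (‖x‖:ℂ) ^ 2 + 0 * ((inner ℝ (0:E) x : ℝ) : ℂ)) = ((-b * ‖x‖^2 : ℝ) : ℂ) := by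
      push_cast; ring
    dsimp only
    rw [this]
    exact Complex.exp_ofReal_re _
  calc ∫⁻ x : E, ENNReal.ofReal ((2 * π * σ ^ 2) ^ (-(m:ℝ) / 2) * rexp (-‖x‖ ^ 2 / (2 * σ ^ 2)))
      = ∫⁻ x : E, ENNReal.ofReal ((2 * π * σ ^ 2) ^ (-(m:ℝ) / 2))
          * ENNReal.ofReal (rexp (-b * ‖x‖ ^ 2)) := by
        refine lintegral_congr fun x => ?_
        rw [← ENNReal.ofReal_mul hCpos.le, hexp x]
    _ = ENNReal.ofReal ((2 * π * σ ^ 2) ^ (-(m:ℝ) / 2))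
          * ∫⁻ x : E, ENNReal.ofReal (rexp (-b * ‖x‖ ^ 2)) :=
        lintegral_const_mul' _ _ ENNReal.ofReal_ne_top
    _ = ENNReal.ofReal ((2 * π * σ ^ 2) ^ (-(m:ℝ) / 2))
          * ENNReal.ofReal (∫ x : E, rexp (-b * ‖x‖ ^ 2)) := by
        rw [← ofReal_integral_eq_lintegral_ofReal hInt
          (ae_of_all _ fun x => (Real.exp_pos _).le)]
    _ = 1 := by
        rw [GaussianFourier.integral_rexp_neg_mul_sq_norm hbpos,
          (by exact finrank_euclideanSpace_fin : finrank ℝ E = m)]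
        rw [← ENNReal.ofReal_mul hCpos.le]
        have hπb : π / b = 2 * π * σ ^ 2 := by rw [hb]; field_simp
        rw [hπb, ← Real.rpow_add (by positivity)]
        rw [neg_div, neg_add_cancel, Real.rpow_zero, ENNReal.ofReal_one]

lemma split (m : ℕ) (hm : 1 ≤ m) (s K : ℝ) (hs0 : 0 < s) (hs1 : s < 1)
    (hball : ∀ R : ℝ, 0 < R → ∫⁻ x : EuclideanSpace ℝ (Fin m) in Metric.ball 0 R,
        (ENNReal.ofReal ‖x‖) ^ (-(m:ℝ) + 1 - s) ≤ ENNReal.ofReal (K * R ^ (1 - s)))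
    (g : EuclideanSpace ℝ (Fin m) → ℝ≥0∞) (hg : ∫⁻ x, g x = 1)
    (z : EuclideanSpace ℝ (Fin m)) (R M : ℝ) (hR : 0 < R) (hM : 0 ≤ M)
    (hb : ∀ x ∈ Metric.ball z R, g x ≤ ENNReal.ofReal M) :
    ∫⁻ x, (ENNReal.ofReal ‖x - z‖) ^ (-(m:ℝ) + 1 - s) * g x
      ≤ ENNReal.ofReal (M * (K * R ^ (1 - s)))
        + (ENNReal.ofReal R) ^ (-(m:ℝ) + 1 - s) := by
  set α : ℝ := -(m:ℝ) + 1 - s with hαdef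
  have hm' : (1:ℝ) ≤ (m:ℝ) := by exact_mod_cast hm
  have hαneg : α < 0 := by rw [hαdef]; linarith
  have hfin : (ENNReal.ofReal R) ^ α ≠ ⊤ := by
    rw [ENNReal.ofReal_rpow_of_pos hR]; exact ENNReal.ofReal_ne_top
  rw [← lintegral_add_compl (fun x => (ENNReal.ofReal ‖x - z‖) ^ α * g x)
    (measurableSet_ball (x := z) (ε := R))]
  apply add_le_add
  · -- near part
    have htrans : ∫⁻ x in Metric.ball z R, (ENNReal.ofReal ‖x - z‖) ^ α
        = ∫⁻ x in Metric.ball (0 : EuclideanSpace ℝ (Fin m)) R, (ENNReal.ofReal ‖x‖) ^ α := by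
      rw [← lintegral_indicator measurableSet_ball, ← lintegral_indicator measurableSet_ball]
      rw [← lintegral_add_right_eq_self
        (fun x => (Metric.ball (0 : EuclideanSpace ℝ (Fin m)) R).indicator
          (fun y => (ENNReal.ofReal ‖y‖) ^ α) x) (-z)]
      refine lintegral_congr fun x => ?_
      by_cases hx : x ∈ Metric.ball z R
      · have hx' : x + -z ∈ Metric.ball (0 : EuclideanSpace ℝ (Fin m)) R := by
          rw [mem_ball_zero_iff, ← sub_eq_add_neg]
          rwa [mem_ball, dist_eq_norm] at hx
        rw [indicator_of_mem hx, indicator_of_mem hx', ← sub_eq_add_neg]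
      · have hx' : x + -z ∉ Metric.ball (0 : EuclideanSpace ℝ (Fin m)) R := by
          rw [mem_ball_zero_iff, ← sub_eq_add_neg]
          rw [mem_ball, dist_eq_norm] at hx
          exact hx
        rw [indicator_of_notMem hx, indicator_of_notMem hx']
    calc ∫⁻ x in Metric.ball z R, (ENNReal.ofReal ‖x - z‖) ^ α * g x
        ≤ ∫⁻ x in Metric.ball z R, ENNReal.ofReal M * (ENNReal.ofReal ‖x - z‖) ^ α := by
          refine lintegral_mono_ae ?_
          filter_upwards [ae_restrict_mem measurableSet_ball] with x hx
          exact (mul_le_mul_right (hb x hx) _).trans_eq (mul_comm _ _)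
      _ = ENNReal.ofReal M * ∫⁻ x in Metric.ball z R, (ENNReal.ofReal ‖x - z‖) ^ α :=
          lintegral_const_mul' _ _ ENNReal.ofReal_ne_top
      _ ≤ ENNReal.ofReal M * ENNReal.ofReal (K * R ^ (1 - s)) := by
          rw [htrans]; exact mul_le_mul_right (hball R hR) _
      _ = ENNReal.ofReal (M * (K * R ^ (1 - s))) := (ENNReal.ofReal_mul hM).symm
  · -- far part
    calc ∫⁻ x in (Metric.ball z R)ᶜ, (ENNReal.ofReal ‖x - z‖) ^ α * g x
        ≤ ∫⁻ x in (Metric.ball z R)ᶜ, (ENNReal.ofReal R) ^ α * g x := by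
          refine lintegral_mono_ae ?_
          filter_upwards [ae_restrict_mem measurableSet_ball.compl] with x hx
          refine mul_le_mul_left (rpow_anti (ENNReal.ofReal_le_ofReal ?_) hαneg.le) _
          rw [mem_compl_iff, mem_ball, dist_eq_norm, not_lt] at hx
          exact hx
      _ = (ENNReal.ofReal R) ^ α * ∫⁻ x in (Metric.ball z R)ᶜ, g x :=
          lintegral_const_mul' _ _ hfin
      _ ≤ (ENNReal.ofReal R) ^ α * 1 :=
          mul_le_mul_right ((setLIntegral_le_lintegral _ _).trans_eq hg) _
      _ = (ENNReal.ofReal R) ^ α := mul_one _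


end Stmt8Aux

open Stmt8Aux Metric in
/-- Negative moment bound for a centered Gaussian vector `Z ∼ N(0, σ²I)` on `ℝ^m`:
there is `c > 0` depending only on `m` and `s` such that
`E|Z - z|^{-m+1-s} ≤ c (σ^{-m+1-s} ∧ |z|^{-m+1-s})` for all `σ > 0` and `z ∈ ℝ^m`. -/
theorem stmt8 (m : ℕ) (hm : 1 ≤ m) (s : ℝ) (hs0 : 0 < s) (hs1 : s < 1) :
    ∃ c : ℝ, 0 < c ∧ ∀ σ : ℝ, 0 < σ → ∀ z : EuclideanSpace ℝ (Fin m),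
      (∫⁻ x : EuclideanSpace ℝ (Fin m),
          (ENNReal.ofReal ‖x - z‖) ^ (-(m:ℝ) + 1 - s) *
            ENNReal.ofReal ((2 * π * σ ^ 2) ^ (-(m:ℝ) / 2) *
              Real.exp (-‖x‖ ^ 2 / (2 * σ ^ 2))))
        ≤ ENNReal.ofReal c *
            min ((ENNReal.ofReal σ) ^ (-(m:ℝ) + 1 - s))
              ((ENNReal.ofReal ‖z‖) ^ (-(m:ℝ) + 1 - s)) := by
  obtain ⟨K, hK, hball⟩ := ball_bound m hm s hs0 hs1
  set α : ℝ := -(m:ℝ) + 1 - s with hαdef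
  have hm' : (1:ℝ) ≤ (m:ℝ) := by exact_mod_cast hm
  have hαneg : α < 0 := by rw [hαdef]; linarith
  set tp : ℝ := (2 * π) ^ (-(m:ℝ) / 2) with htp
  have htppos : 0 < tp := Real.rpow_pos_of_pos (by positivity) _
  set B : ℝ := Real.exp (2 * (m:ℝ)^2) with hB
  have hBpos : 0 < B := Real.exp_pos _
  set c₁ : ℝ := tp * K + 1 with hc₁
  set c₂ : ℝ := tp * K * B + (2:ℝ) ^ (-α) with hc₂
  have hc₁pos : 0 < c₁ := by positivity
  have hc₂pos : 0 < c₂ := by positivity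
  refine ⟨max c₁ c₂, lt_max_of_lt_left hc₁pos, fun σ hσ z => ?_⟩
  set g : EuclideanSpace ℝ (Fin m) → ℝ≥0∞ := fun x =>
    ENNReal.ofReal ((2 * π * σ ^ 2) ^ (-(m:ℝ) / 2) * Real.exp (-‖x‖ ^ 2 / (2 * σ ^ 2))) with hgdef
  have hg : ∫⁻ x, g x = 1 := mass m hσ
  have hDpos : 0 < (2 * π * σ ^ 2) ^ (-(m:ℝ) / 2) := Real.rpow_pos_of_pos (by positivity) _
  have hD : (2 * π * σ ^ 2) ^ (-(m:ℝ) / 2) = tp * σ ^ (-(m:ℝ)) := by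
    rw [htp, Real.mul_rpow (by positivity) (by positivity)]
    congr 1
    have h2 : (σ:ℝ) ^ (2:ℕ) = σ ^ ((2:ℕ):ℝ) := (Real.rpow_natCast σ 2).symm
    rw [h2, ← Real.rpow_mul hσ.le]
    congr 1
    push_cast
    ring
  -- Estimate 1
  have est1 : ∫⁻ x, (ENNReal.ofReal ‖x - z‖) ^ α * g x
      ≤ ENNReal.ofReal c₁ * (ENNReal.ofReal σ) ^ α := by
    have hb1 : ∀ x ∈ Metric.ball z σ, g x ≤ ENNReal.ofReal ((2 * π * σ ^ 2) ^ (-(m:ℝ) / 2)) := by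
      intro x _
      apply ENNReal.ofReal_le_ofReal
      have hx1 : Real.exp (-‖x‖ ^ 2 / (2 * σ ^ 2)) ≤ 1 := by
        apply Real.exp_le_one_iff.2
        rw [neg_div]
        have : 0 ≤ ‖x‖ ^ 2 / (2 * σ ^ 2) := by positivity
        linarith
      exact mul_le_of_le_one_right hDpos.le hx1
    have h := split m hm s K hs0 hs1 hball g hg z σ _ hσ hDpos.le hb1
    refine h.trans ?_
    have hterm : (2 * π * σ ^ 2) ^ (-(m:ℝ) / 2) * (K * σ ^ (1 - s)) = (tp * K) * σ ^ α := by
      rw [hD, hαdef]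
      rw [show -(m:ℝ) + 1 - s = -(m:ℝ) + (1 - s) by ring, Real.rpow_add hσ]
      ring
    rw [hterm, ENNReal.ofReal_rpow_of_pos hσ, hc₁,
      ENNReal.ofReal_add (by positivity) zero_le_one, add_mul,
      ENNReal.ofReal_mul (by positivity), ENNReal.ofReal_one, one_mul]
  -- Estimate 2
  have est2 : z ≠ 0 → ∫⁻ x, (ENNReal.ofReal ‖x - z‖) ^ α * g x
      ≤ ENNReal.ofReal c₂ * (ENNReal.ofReal ‖z‖) ^ α := by
    intro hz
    set r : ℝ := ‖z‖ with hrdef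
    have hr : 0 < r := norm_pos_iff.2 hz
    set M : ℝ := (2 * π * σ ^ 2) ^ (-(m:ℝ) / 2) * Real.exp (-(r^2/(8*σ^2))) with hM
    have hMpos : 0 < M := by positivity
    have hb2 : ∀ x ∈ Metric.ball z (r/2), g x ≤ ENNReal.ofReal M := by
      intro x hx
      apply ENNReal.ofReal_le_ofReal
      have hxz : ‖x - z‖ < r/2 := by rwa [mem_ball, dist_eq_norm] at hx
      have hnx : r/2 ≤ ‖x‖ := by
        have h5 : r - ‖x‖ ≤ ‖x - z‖ := by
          calc r - ‖x‖ = ‖z‖ - ‖x‖ := rfl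
            _ ≤ ‖z - x‖ := norm_sub_norm_le z x
            _ = ‖x - z‖ := norm_sub_rev z x
        linarith
      have h6 : -‖x‖ ^ 2 / (2 * σ ^ 2) ≤ -(r^2/(8*σ^2)) := by
        rw [show -(r^2/(8*σ^2)) = -(r^2/4) / (2 * σ^2) by ring]
        gcongr
        nlinarith
      exact mul_le_mul_of_nonneg_left (Real.exp_le_exp.2 h6) hDpos.le
    have h := split m hm s K hs0 hs1 hball g hg z (r/2) M (by positivity) hMpos.le hb2
    refine h.trans ?_
    have hkey : σ ^ (-(m:ℝ)) * Real.exp (-(r^2/(8*σ^2))) ≤ B * r ^ (-(m:ℝ)) := by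
      have h3 := texp_bound m (t := r/σ) (by positivity)
      rw [Real.div_rpow hr.le hσ.le] at h3
      have heq : (r/σ)^2/8 = r^2/(8*σ^2) := by rw [div_pow]; ring
      rw [heq] at h3
      rw [div_le_iff₀ (by positivity)] at h3
      rw [Real.rpow_neg hσ.le, Real.rpow_neg hr.le, Real.exp_neg]
      have e1 : (σ ^ (m:ℝ))⁻¹ * (Real.exp (r^2/(8*σ^2)))⁻¹
          = 1 / (σ ^ (m:ℝ) * Real.exp (r^2/(8*σ^2))) := by field_simp
      have e2 : B * (r ^ (m:ℝ))⁻¹ = B / r ^ (m:ℝ) := (div_eq_mul_inv B _).symm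
      rw [e1, e2, div_le_div_iff₀ (by positivity) (by positivity)]
      nlinarith [h3]
    have hterm1 : M * (K * (r/2) ^ (1 - s)) ≤ (tp * K * B) * r ^ α := by
      have h7 : (r/2) ^ (1-s) ≤ r ^ (1-s) :=
        Real.rpow_le_rpow (by positivity) (by linarith) (by linarith)
      have h8 : M * (K * (r/2) ^ (1 - s)) ≤ M * (K * r ^ (1-s)) := by
        apply mul_le_mul_of_nonneg_left _ hMpos.le
        exact mul_le_mul_of_nonneg_left h7 hK.le
      refine h8.trans ?_
      have : M * (K * r ^ (1-s)) = (tp * K) * (σ ^ (-(m:ℝ)) * Real.exp (-(r^2/(8*σ^2)))) * r ^ (1-s) := by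
        rw [hM, hD]; ring
      rw [this]
      have h9 : (tp * K) * (σ ^ (-(m:ℝ)) * Real.exp (-(r^2/(8*σ^2)))) * r ^ (1-s)
          ≤ (tp * K) * (B * r ^ (-(m:ℝ))) * r ^ (1-s) := by
        apply mul_le_mul_of_nonneg_right _ (by positivity)
        exact mul_le_mul_of_nonneg_left hkey (by positivity)
      refine h9.trans (le_of_eq ?_)
      rw [hαdef, show -(m:ℝ) + 1 - s = -(m:ℝ) + (1 - s) by ring, Real.rpow_add hr]
      ring
    have hterm2 : (ENNReal.ofReal (r/2)) ^ α = ENNReal.ofReal ((2:ℝ)^(-α) * r ^ α) := by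
      rw [ENNReal.ofReal_rpow_of_pos (by positivity)]
      congr 1
      rw [show r/2 = r * 2⁻¹ by ring, Real.mul_rpow hr.le (by norm_num),
        Real.inv_rpow (by norm_num), ← Real.rpow_neg (by norm_num)]
      ring
    calc ENNReal.ofReal (M * (K * (r/2) ^ (1 - s))) + (ENNReal.ofReal (r/2)) ^ α
        ≤ ENNReal.ofReal ((tp * K * B) * r ^ α) + ENNReal.ofReal ((2:ℝ)^(-α) * r ^ α) := by
          exact add_le_add (ENNReal.ofReal_le_ofReal hterm1) (le_of_eq hterm2)
      _ = ENNReal.ofReal (c₂ * r ^ α) := by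
          rw [← ENNReal.ofReal_add (by positivity) (by positivity), hc₂]
          congr 1; ring
      _ = ENNReal.ofReal c₂ * (ENNReal.ofReal r) ^ α := by
          rw [ENNReal.ofReal_rpow_of_pos hr, ← ENNReal.ofReal_mul hc₂pos.le]
  -- combine
  rcases eq_or_ne z 0 with hz | hz
  · subst hz
    rw [show ‖(0 : EuclideanSpace ℝ (Fin m))‖ = 0 from norm_zero, ENNReal.ofReal_zero,
      ENNReal.zero_rpow_of_neg hαneg, min_eq_left le_top]
    refine est1.trans (mul_le_mul_left (ENNReal.ofReal_le_ofReal (le_max_left _ _)) _)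
  · rcases le_total ((ENNReal.ofReal σ) ^ α) ((ENNReal.ofReal ‖z‖) ^ α) with hmin | hmin
    · rw [min_eq_left hmin]
      exact est1.trans (mul_le_mul_left (ENNReal.ofReal_le_ofReal (le_max_left _ _)) _)
    · rw [min_eq_right hmin]
      exact (est2 hz).trans
        (mul_le_mul_left (ENNReal.ofReal_le_ofReal (le_max_right _ _)) _)
end
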